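/- arXiv:2204.08234 — 3 statements merged into one kernel-verified Lean document; each statement's English description precedes it below -/
import Mathlib

section
/- Let G be a connected multigraph and H a proper induced subgraph of G. Let k be the number of edges of G adjacent to H but not contained in H. Then the number of leaves of the forest of 2-edge-connected components of H satisfies #l(H^Br) ≤ #l(G^Br) + k. -/
/-- A finite multigraph: loops and parallel edges allowed. -/
structure Multigraph where
  V : Type
  E : Type
  finV : Finite V
  finE : Finite E
  src : E → V
  tgt : E → V

namespace Multigraph

attribute [instance] Multigraph.finV Multigraph.finE

variable (G : Multigraph)

/-- Adjacency using only edges in `S`. -/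
def Adj (S : Set G.E) (u v : G.V) : Prop :=
  ∃ e ∈ S, (G.src e = u ∧ G.tgt e = v) ∨ (G.src e = v ∧ G.tgt e = u)

/-- Reachability using only edges in `S`. -/
def ReachOn (S : Set G.E) : G.V → G.V → Prop :=
  Relation.ReflTransGen (G.Adj S)

/-- Reachability in `G`. -/
def Reach : G.V → G.V → Prop := G.ReachOn Set.univ

def Connected : Prop := Nonempty G.V ∧ ∀ u v : G.V, G.Reach u v

/-- An edge is a bridge iff its removal disconnects its endpoints. -/
def IsBridge (e : G.E) : Prop := ¬ G.ReachOn {f | f ≠ e} (G.src e) (G.tgt e)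

def TwoEdgeConnected : Prop := G.Connected ∧ ∀ e : G.E, ¬ G.IsBridge e

/-- The graph `G^Br` obtained by contracting all non-bridge edges: its
vertices are the 2-edge-connected components of `G`, its edges the bridges. -/
def Br : Multigraph where
  V := Quot (G.ReachOn {e | ¬ G.IsBridge e})
  E := {e : G.E // G.IsBridge e}
  finV := Finite.of_surjective _ Quot.exists_rep
  finE := Subtype.finite
  src e := Quot.mk _ (G.src e.1)
  tgt e := Quot.mk _ (G.tgt e.1)

/-- Number of edges adjacent to a vertex (loops counted once; used only
for forests, which have no loops). -/
noncomputable def degAt (v : G.V) : ℕ := {e : G.E | G.src e = v ∨ G.tgt e = v}.ncard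

/-- Leaf count of a forest, with the convention that an isolated vertex
(a single-vertex tree) counts as `2` leaves. -/
noncomputable def numLeaves : ℕ :=
  2 * {v : G.V | G.degAt v = 0}.ncard + {v : G.V | G.degAt v = 1}.ncard

/-- The induced subgraph on a set of vertices. -/
def induce (W : Set G.V) : Multigraph where
  V := W
  E := {e : G.E // G.src e ∈ W ∧ G.tgt e ∈ W}
  finV := Subtype.finite
  finE := Subtype.finite
  src e := ⟨G.src e.1, e.2.1⟩
  tgt e := ⟨G.tgt e.1, e.2.2⟩

/-- Deletion of an edge. -/
def deleteEdge (e : G.E) : Multigraph where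
  V := G.V
  E := {f : G.E // f ≠ e}
  finV := G.finV
  finE := Subtype.finite
  src f := G.src f.1
  tgt f := G.tgt f.1

/-- Valence of a vertex, loops counted twice. -/
noncomputable def valence (v : G.V) : ℕ :=
  {e : G.E | G.src e = v}.ncard + {e : G.E | G.tgt e = v}.ncard

/-- Number of edges joining `w` to the set `S` (for `w ∉ S`). -/
noncomputable def edgesTo (w : G.V) (S : Set G.V) : ℕ :=
  {e : G.E | (G.src e = w ∧ G.tgt e ∈ S) ∨ (G.tgt e = w ∧ G.src e ∈ S)}.ncard

/-- The Dhar subgraph `Dh(v, d)`: the smallest set of vertices containing `v`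
that is closed under adding a vertex `w` whenever `d w` is smaller than the
number of edges joining `w` to the set. -/
def dhar (d : G.V → ℤ) (v : G.V) : Set G.V :=
  ⋂₀ {S : Set G.V | v ∈ S ∧ ∀ w ∉ S, (G.edgesTo w S : ℤ) ≤ d w}

end Multigraph

/-- A vertex-weighted finite multigraph. -/
structure WGraph extends Multigraph where
  weight : V → ℕ

namespace WGraph

variable (G : WGraph)

/-- The genus `1 - |V| + |E| + Σ_v g_v`. -/
noncomputable def genus : ℤ :=
  1 - (Nat.card G.V : ℤ) + Nat.card G.E + ∑ᶠ v : G.V, (G.weight v : ℤ)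

def Semistable : Prop := ∀ v : G.V, G.weight v = 0 → 2 ≤ G.toMultigraph.valence v

def Stable : Prop := ∀ v : G.V,
  (G.weight v = 0 → 3 ≤ G.toMultigraph.valence v) ∧
  (G.weight v = 1 → 1 ≤ G.toMultigraph.valence v)

/-- Induced weighted subgraph. -/
def induce (W : Set G.V) : WGraph :=
  { G.toMultigraph.induce W with weight := fun v => G.weight v.1 }

/-- The genus of the induced subgraph on `W`:
`|E(W)| - |W| + c(W) + Σ_{v ∈ W} g_v`. -/
noncomputable def genusOf (W : Set G.V) : ℤ :=
  (Nat.card (G.toMultigraph.induce W).E : ℤ) - Nat.card W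
    + Nat.card (Quot (G.toMultigraph.induce W).Reach)
    + ∑ᶠ v ∈ W, (G.weight v : ℤ)

end WGraph


/-!
Each 2-edge-connected component `q` of `G[W]` spans a set `S_q ⊆ W` whose boundary in `G` splits
into the `d_q` bridges of `G[W]` at `q` (so `d_q` is the degree of `q` in `G[W]^Br`) and the `c_q`
edges from `S_q` to the complement of `W`; every boundary edge of `W` is counted in exactly one
`c_q`. As `G` is connected and `W` proper, `d_q + c_q ≥ 1`, so `q` contributes at most
`c_q + [d_q + c_q = 1]` leaves. When `S_q` has a single boundary edge, that edge is a bridge of `G`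
and `S_q` is a 2-edge-connected component of `G` which is a leaf of `G^Br`; distinct such `q` give
distinct leaves.
-/

namespace Multigraph

variable {G : Multigraph}

section Reachability

variable {S : Set G.E} {u v : G.V}

lemma Adj.symm (h : G.Adj S u v) : G.Adj S v u := by
  obtain ⟨e, he, h | h⟩ := h
  exacts [⟨e, he, Or.inr h⟩, ⟨e, he, Or.inl h⟩]

lemma ReachOn.symm (h : G.ReachOn S u v) : G.ReachOn S v u := by
  induction h with
  | refl => exact .refl
  | tail _ hadj ih => exact .head hadj.symm ih

lemma ReachOn.mono {T : Set G.E} (hST : S ⊆ T) (h : G.ReachOn S u v) : G.ReachOn T u v :=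
  Relation.ReflTransGen.mono (fun _ _ ⟨e, he, h⟩ => ⟨e, hST he, h⟩) _ _ h

lemma quot_mk_eq_iff_reachOn :
    Quot.mk (G.ReachOn S) u = Quot.mk (G.ReachOn S) v ↔ G.ReachOn S u v := by
  rw [Quot.eq]
  exact Equivalence.eqvGen_iff ⟨fun _ => .refl, ReachOn.symm, .trans⟩

end Reachability

def boundary (A : Set G.V) : Set G.E :=
  {e | (G.src e ∈ A ∨ G.tgt e ∈ A) ∧ ¬(G.src e ∈ A ∧ G.tgt e ∈ A)}

lemma mem_boundary_iff {A : Set G.V} {e : G.E} :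
    e ∈ G.boundary A ↔ ¬(G.src e ∈ A ↔ G.tgt e ∈ A) := by
  simp only [boundary, Set.mem_ofPred_eq]
  tauto

lemma ReachOn.mem_iff_mem {S : Set G.E} {A : Set G.V} {u v : G.V} (h : G.ReachOn S u v)
    (hS : Disjoint S (G.boundary A)) : u ∈ A ↔ v ∈ A := by
  induction h with
  | refl => rfl
  | tail _ hadj ih =>
    obtain ⟨e, he, hends⟩ := hadj
    have hA := Set.disjoint_left.mp hS he
    rw [mem_boundary_iff, not_not] at hA
    rcases hends with ⟨rfl, rfl⟩ | ⟨rfl, rfl⟩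
    exacts [ih.trans hA, ih.trans hA.symm]

lemma Connected.boundary_nonempty (hG : G.Connected) {A : Set G.V} (hne : A.Nonempty)
    (hA : A ≠ Set.univ) : (G.boundary A).Nonempty := by
  rw [Set.nonempty_iff_ne_empty]
  intro h
  obtain ⟨u, hu⟩ := hne
  exact hA (Set.eq_univ_of_forall fun v =>
    (ReachOn.mem_iff_mem (hG.2 u v) (by simp [h])).mp hu)

lemma isBridge_of_boundary_eq_singleton {A : Set G.V} {e : G.E} (h : G.boundary A = {e}) :
    G.IsBridge e := by
  intro hr
  have he : e ∈ G.boundary A := h ▸ rfl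
  rw [mem_boundary_iff] at he
  exact he (hr.mem_iff_mem (by simp [h]))

section TwoEdgeConnectedComponents

def brFiber (p : G.Br.V) : Set G.V := {v | (Quot.mk _ v : G.Br.V) = p}

lemma mk_src_eq_mk_tgt_of_not_isBridge {e : G.E} (he : ¬ G.IsBridge e) :
    (Quot.mk _ (G.src e) : G.Br.V) = Quot.mk _ (G.tgt e) :=
  Quot.sound (.single ⟨e, he, Or.inl ⟨rfl, rfl⟩⟩)

lemma IsBridge.mk_src_ne_mk_tgt {e : G.E} (he : G.IsBridge e) :
    (Quot.mk _ (G.src e) : G.Br.V) ≠ Quot.mk _ (G.tgt e) := fun h =>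
  he ((quot_mk_eq_iff_reachOn.mp h).mono fun f (hf : ¬ G.IsBridge f) hfe => hf (hfe ▸ he))

lemma degAt_br (p : G.Br.V) : G.Br.degAt p = (G.boundary (G.brFiber p)).ncard := by
  have himage : Subtype.val '' {b : G.Br.E | G.Br.src b = p ∨ G.Br.tgt b = p}
      = G.boundary (G.brFiber p) := by
    ext e
    constructor
    · rintro ⟨b, hb, rfl⟩
      exact ⟨hb, fun ⟨hs, ht⟩ => b.2.mk_src_ne_mk_tgt (hs.trans ht.symm)⟩
    · intro he
      have hbr : G.IsBridge e := by
        by_contra hnb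
        exact mem_boundary_iff.mp he (by
          simp only [brFiber, Set.mem_ofPred_eq, mk_src_eq_mk_tgt_of_not_isBridge hnb])
      exact ⟨⟨e, hbr⟩, he.1, rfl⟩
  rw [← himage, Set.ncard_image_of_injective _ Subtype.val_injective]
  rfl

end TwoEdgeConnectedComponents

section InducedSubgraph

variable {W : Set G.V}

lemma reachOn_val_of_induce {T : Set (G.induce W).E} {S : Set G.E} (hTS : ∀ f ∈ T, f.1 ∈ S)
    {u v : (G.induce W).V} (h : (G.induce W).ReachOn T u v) : G.ReachOn S u.1 v.1 :=
  Relation.ReflTransGen.lift Subtype.val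
    (fun _ _ ⟨f, hf, hadj⟩ => ⟨f.1, hTS f hf, by
      rcases hadj with ⟨rfl, rfl⟩ | ⟨rfl, rfl⟩
      exacts [Or.inl ⟨rfl, rfl⟩, Or.inr ⟨rfl, rfl⟩]⟩) _ _ h

lemma not_isBridge_val_of_induce {f : (G.induce W).E} (hf : ¬ (G.induce W).IsBridge f) :
    ¬ G.IsBridge f.1 := fun hB =>
  hf fun h => hB (reachOn_val_of_induce (S := {e | e ≠ f.1})
    (fun g (hg : g ≠ f) he => hg (Subtype.ext he)) h)

variable (W) in
def brMap : (G.induce W).Br.V → G.Br.V :=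
  Quot.map Subtype.val fun _ _ => reachOn_val_of_induce fun _ hf => not_isBridge_val_of_induce hf

lemma image_brFiber_subset_brFiber_brMap (q : (G.induce W).Br.V) :
    Subtype.val '' (G.induce W).brFiber q ⊆ G.brFiber (brMap W q) := by
  rintro _ ⟨v, rfl, rfl⟩
  rfl

lemma eq_of_mem_image_brFiber {q q' : (G.induce W).Br.V} {v : G.V}
    (hv : v ∈ Subtype.val '' (G.induce W).brFiber q)
    (hv' : v ∈ Subtype.val '' (G.induce W).brFiber q') : q = q' := by
  obtain ⟨a, rfl, rfl⟩ := hv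
  obtain ⟨b, rfl, hb⟩ := hv'
  rw [Subtype.ext hb]

lemma image_val_subset (T : Set (G.induce W).V) : Subtype.val '' T ⊆ W :=
  Subtype.coe_image_subset W T

lemma val_mem_boundary_image_val_iff (T : Set (G.induce W).V) (f : (G.induce W).E) :
    f.1 ∈ G.boundary (Subtype.val '' T) ↔ f ∈ (G.induce W).boundary T := by
  have hs : G.src f.1 ∈ Subtype.val '' T ↔ (G.induce W).src f ∈ T :=
    Subtype.val_injective.mem_set_image (a := (G.induce W).src f)
  have ht : G.tgt f.1 ∈ Subtype.val '' T ↔ (G.induce W).tgt f ∈ T :=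
    Subtype.val_injective.mem_set_image (a := (G.induce W).tgt f)
  rw [mem_boundary_iff, mem_boundary_iff, hs, ht]

lemma boundary_image_val_diff_boundary (T : Set (G.induce W).V) :
    G.boundary (Subtype.val '' T) \ G.boundary W = Subtype.val '' (G.induce W).boundary T := by
  ext e
  constructor
  · rintro ⟨hT, hW⟩
    have hsW : G.src e ∈ W ∧ G.tgt e ∈ W := by
      have := @image_val_subset _ _ T (G.src e)
      have := @image_val_subset _ _ T (G.tgt e)
      simp only [boundary, Set.mem_ofPred_eq] at hT hW
      tauto
    exact ⟨⟨e, hsW⟩, (val_mem_boundary_image_val_iff T ⟨e, hsW⟩).mp hT, rfl⟩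
  · rintro ⟨f, hf, rfl⟩
    exact ⟨(val_mem_boundary_image_val_iff T f).mpr hf, fun h => h.2 f.2⟩

lemma ncard_boundary_image_val (T : Set (G.induce W).V) :
    (G.boundary (Subtype.val '' T)).ncard
      = ((G.induce W).boundary T).ncard
        + (G.boundary (Subtype.val '' T) ∩ G.boundary W).ncard := by
  rw [← Set.ncard_inter_add_ncard_sdiff_eq_ncard _ (G.boundary W),
    boundary_image_val_diff_boundary, add_comm]
  exact congrArg (· + _) (Set.ncard_image_of_injective _ Subtype.val_injective)

lemma mem_boundary_inter_boundary_iff {S : Set G.V} (hSW : S ⊆ W) {e : G.E} :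
    e ∈ G.boundary S ∩ G.boundary W ↔
      (G.src e ∈ S ∧ G.tgt e ∉ W) ∨ (G.tgt e ∈ S ∧ G.src e ∉ W) := by
  have := @hSW (G.src e)
  have := @hSW (G.tgt e)
  simp only [Set.mem_inter_iff, mem_boundary_iff]
  tauto

lemma finsum_ncard_boundary_inter_boundary :
    ∑ᶠ q, (G.boundary (Subtype.val '' (G.induce W).brFiber q) ∩ G.boundary W).ncard
      = (G.boundary W).ncard := by
  have hS := fun q : (G.induce W).Br.V => image_val_subset ((G.induce W).brFiber q)
  rw [← Set.ncard_iUnion_of_finite (fun _ => Set.toFinite _)]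
  · congr 1
    refine subset_antisymm (Set.iUnion_subset fun _ => Set.inter_subset_right) fun e he => ?_
    obtain ⟨hs, ht⟩ | ⟨ht, hs⟩ :
        (G.src e ∈ W ∧ G.tgt e ∉ W) ∨ (G.tgt e ∈ W ∧ G.src e ∉ W) := by
      simp only [boundary, Set.mem_ofPred_eq] at he
      tauto
    · refine Set.mem_iUnion.mpr ⟨Quot.mk _ ⟨G.src e, hs⟩, ?_⟩
      exact (mem_boundary_inter_boundary_iff (hS _)).mpr
        (Or.inl ⟨⟨⟨_, hs⟩, rfl, rfl⟩, ht⟩)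
    · refine Set.mem_iUnion.mpr ⟨Quot.mk _ ⟨G.tgt e, ht⟩, ?_⟩
      exact (mem_boundary_inter_boundary_iff (hS _)).mpr
        (Or.inr ⟨⟨⟨_, ht⟩, rfl, rfl⟩, hs⟩)
  · intro q q' hqq'
    refine Set.disjoint_left.mpr fun e he he' => hqq' ?_
    rw [mem_boundary_inter_boundary_iff (hS _)] at he he'
    rcases he with ⟨hs, ht⟩ | ⟨ht, hs⟩ <;> rcases he' with ⟨hs', ht'⟩ | ⟨ht', hs'⟩
    · exact eq_of_mem_image_brFiber hs hs'
    · exact absurd (hS _ hs) hs'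
    · exact absurd (hS _ ht) ht'
    · exact eq_of_mem_image_brFiber ht ht'

lemma brFiber_brMap_eq {q : (G.induce W).Br.V}
    (h : (G.boundary (Subtype.val '' (G.induce W).brFiber q)).ncard = 1) :
    G.brFiber (brMap W q) = Subtype.val '' (G.induce W).brFiber q := by
  obtain ⟨e, he⟩ := Set.ncard_eq_one.mp h
  have hbr := isBridge_of_boundary_eq_singleton he
  refine subset_antisymm ?_ (image_brFiber_subset_brFiber_brMap q)
  obtain ⟨r, rfl⟩ := Quot.exists_rep q
  intro v hv
  have hr : G.ReachOn {e | ¬ G.IsBridge e} r.1 v := quot_mk_eq_iff_reachOn.mp hv.symm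
  refine (hr.mem_iff_mem ?_).mp ⟨r, rfl, rfl⟩
  simp [he, hbr]

lemma image_brFiber_nonempty (q : (G.induce W).Br.V) :
    (Subtype.val '' (G.induce W).brFiber q).Nonempty :=
  let ⟨r, hr⟩ := Quot.exists_rep q
  ⟨r.1, r, hr, rfl⟩

lemma degAt_brMap_eq_one {q : (G.induce W).Br.V}
    (h : (G.boundary (Subtype.val '' (G.induce W).brFiber q)).ncard = 1) :
    G.Br.degAt (brMap W q) = 1 := by
  rw [degAt_br, brFiber_brMap_eq h, h]

lemma injOn_brMap :
    Set.InjOn (brMap W)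
      {q | (G.boundary (Subtype.val '' (G.induce W).brFiber q)).ncard = 1} := by
  intro q hq q' hq' hqq'
  obtain ⟨v, hv⟩ := image_brFiber_nonempty q
  have hv' : v ∈ Subtype.val '' (G.induce W).brFiber q' := by
    rwa [← brFiber_brMap_eq hq', ← hqq', brFiber_brMap_eq hq]
  exact eq_of_mem_image_brFiber hv hv'

end InducedSubgraph

theorem numLeaves_le_numLeaves_add_finsum {F F' : Multigraph} (c : F.V → ℕ) (f : F.V → F'.V)
    (hpos : ∀ v, 1 ≤ F.degAt v + c v)
    (hleaf : ∀ v, F.degAt v + c v = 1 → F'.degAt (f v) = 1)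
    (hinj : Set.InjOn f {v | F.degAt v + c v = 1}) :
    F.numLeaves ≤ F'.numLeaves + ∑ᶠ v, c v := by
  have := Fintype.ofFinite F.V
  have hcard (P : F.V → Prop) [DecidablePred P] :
      {v | P v}.ncard = ∑ v, if P v then 1 else 0 := by
    rw [Set.ncard_eq_toFinset_card', Set.toFinset_ofPred, Finset.sum_boole, Nat.cast_id]
  have hA : {v | F.degAt v + c v = 1}.ncard ≤ F'.numLeaves :=
    (Set.ncard_le_ncard_of_injOn f hleaf hinj).trans (Nat.le_add_left _ _)
  calc F.numLeaves
      = ∑ v, ((if F.degAt v = 0 then 2 else 0) + if F.degAt v = 1 then 1 else 0) := by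
        rw [numLeaves, hcard, hcard, Finset.mul_sum, ← Finset.sum_add_distrib]
        simp only [mul_ite, mul_one, mul_zero]
    _ ≤ ∑ v, (c v + if F.degAt v + c v = 1 then 1 else 0) :=
        Finset.sum_le_sum fun v _ => by have := hpos v; split_ifs <;> omega
    _ = ∑ᶠ v, c v + {v | F.degAt v + c v = 1}.ncard := by
        rw [Finset.sum_add_distrib, finsum_eq_sum_of_fintype, hcard]
    _ ≤ F'.numLeaves + ∑ᶠ v, c v := by omega

end Multigraph

/-- Let `G` be a connected multigraph and `H` a proper induced
subgraph of `G` (given by a proper vertex set `W`). Let `k` be the number of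
edges of `G` adjacent to `H` but not contained in `H`. Then
`#l(H^Br) ≤ #l(G^Br) + k`. -/
theorem leaves_of_induced_le_leaves_add_boundary
    (G : Multigraph) (hG : G.Connected) (W : Set G.V) (hW : W ≠ Set.univ) :
    ((G.induce W).Br.numLeaves : ℤ) ≤ G.Br.numLeaves +
      ({e : G.E | (G.src e ∈ W ∨ G.tgt e ∈ W) ∧ ¬(G.src e ∈ W ∧ G.tgt e ∈ W)}.ncard : ℤ) := by
  set S := fun q : (G.induce W).Br.V => Subtype.val '' (G.induce W).brFiber q
  have hsplit (q) : (G.boundary (S q)).ncard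
      = (G.induce W).Br.degAt q + (G.boundary (S q) ∩ G.boundary W).ncard := by
    rw [Multigraph.degAt_br]
    exact Multigraph.ncard_boundary_image_val _
  have hpos (q) : 1 ≤ (G.boundary (S q)).ncard := by
    refine (Set.ncard_pos (Set.toFinite _)).mpr
      (hG.boundary_nonempty (Multigraph.image_brFiber_nonempty q) fun h => ?_)
    exact hW (Set.eq_univ_of_univ_subset (h ▸ Multigraph.image_val_subset _))
  have key := Multigraph.numLeaves_le_numLeaves_add_finsum (F' := G.Br)
    (fun q => (G.boundary (S q) ∩ G.boundary W).ncard) (Multigraph.brMap W)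
    (fun q => hsplit q ▸ hpos q)
    (fun q hq => Multigraph.degAt_brMap_eq_one ((hsplit q).trans hq))
    (fun q hq q' hq' => Multigraph.injOn_brMap ((hsplit q).trans hq) ((hsplit q').trans hq'))
  rw [Multigraph.finsum_ncard_boundary_inter_boundary] at key
  exact_mod_cast key
end

section
/- Let X be a stable curve of genus g and d̲ a stable multidegree of total degree d. If d = g − 1, or if d = g and every irreducible component of X has geometric genus at least 1, then d̲ is uniform, i.e., 0 ≤ d̲_v ≤ 2g_v − 2 + val(v) for every vertex v of the dual graph. -/
/-- Let `X` be a stable curve of genus `g` (encoded by its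
vertex-weighted dual graph `G`, whose weights are the geometric genera of the
components and where the genus of a subcurve is `genusOf`) and `d̲` a stable
multidegree of total degree `d`, i.e. `Σ_{v ∈ W} d̲_v ≥ g(W)` for every proper
subcurve (nonempty proper induced subgraph `W`). If `d = g - 1`, or `d = g`
and every component has geometric genus at least `1`, then `d̲` is uniform:
`0 ≤ d̲_v ≤ 2 g_v - 2 + val(v)` for every vertex `v`. -/
theorem stable_multidegree_is_uniform
    (G : WGraph) (hconn : G.toMultigraph.Connected) (hstab : G.Stable)
    (d : G.V → ℤ)
    (hstable : ∀ W : Set G.V, W.Nonempty → W ≠ Set.univ →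
      G.genusOf W ≤ ∑ᶠ v ∈ W, d v)
    (htot : (∑ᶠ v : G.V, d v) = G.genus - 1 ∨
      ((∑ᶠ v : G.V, d v) = G.genus ∧ ∀ v : G.V, 1 ≤ G.weight v)) :
    ∀ v : G.V, 0 ≤ d v ∧
      d v ≤ 2 * (G.weight v : ℤ) - 2 + (G.toMultigraph.valence v : ℤ) := by
    classical
  intro v
  by_cases hV : ({v} : Set G.V) = Set.univ
  · -- single-vertex case
    have hall : ∀ w : G.V, w = v := fun w => Set.eq_univ_iff_forall.mp hV w
    have hn1 : Nat.card G.V = 1 := by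
      haveI : Subsingleton G.V := ⟨fun a b => (hall a).trans (hall b).symm⟩
      exact Nat.card_eq_one_iff_unique.mpr ⟨inferInstance, ⟨v⟩⟩
    have hsrc : {e : G.E | G.src e = v} = Set.univ := by
      ext e; simp [hall (G.src e)]
    have htgt : {e : G.E | G.tgt e = v} = Set.univ := by
      ext e; simp [hall (G.tgt e)]
    have hval : G.toMultigraph.valence v = Nat.card G.E + Nat.card G.E := by
      unfold Multigraph.valence
      rw [hsrc, htgt, Set.ncard_univ]
    have hD : (∑ᶠ w, d w) = d v := by
      rw [← finsum_mem_univ d, ← hV, finsum_mem_singleton]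
    have hS : (∑ᶠ w, (G.weight w : ℤ)) = (G.weight v : ℤ) := by
      rw [← finsum_mem_univ (fun w => (G.weight w : ℤ)), ← hV, finsum_mem_singleton]
    have hg : G.genus = 1 - (1 : ℤ) + Nat.card G.E + (G.weight v : ℤ) := by
      rw [WGraph.genus, hS, hn1]; push_cast; ring
    obtain ⟨h0, h1⟩ := hstab v
    rw [hval] at h0 h1 ⊢
    rcases htot with h | ⟨h, hw1⟩
    · rw [hD, hg] at h
      omega
    · rw [hD, hg] at h
      have := hw1 v
      omega
  · -- general case: at least two vertices
    have hex : ∃ w : G.V, w ≠ v := by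
      by_contra h
      push_neg at h
      exact hV (Set.eq_univ_iff_forall.mpr fun w => h w)
    obtain ⟨w0, hw0⟩ := hex
    -- the sum-splitting identity
    have hsplit : ∀ f : G.V → ℤ, f v + ∑ᶠ w ∈ ({v}ᶜ : Set G.V), f w = ∑ᶠ w, f w := by
      intro f
      rw [← finsum_mem_univ f, ← Set.union_compl_self ({v} : Set G.V),
        finsum_mem_union disjoint_compl_right (Set.toFinite _) (Set.toFinite _),
        finsum_mem_singleton]
    constructor
    · -- lower bound via W = {v}
      have h1 := hstable {v} ⟨v, rfl⟩ hV
      rw [finsum_mem_singleton] at h1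
      refine le_trans ?_ h1
      rw [WGraph.genusOf]
      have hcard1 : (Nat.card ↥({v} : Set G.V) : ℤ) = 1 := by
        rw [Nat.card_coe_set_eq, Set.ncard_singleton]; rfl
      have hc : 1 ≤ Nat.card (Quot (G.toMultigraph.induce ({v} : Set G.V)).Reach) := by
        haveI : Finite (Quot (G.toMultigraph.induce ({v} : Set G.V)).Reach) :=
          Finite.of_surjective _ Quot.exists_rep
        haveI : Nonempty (Quot (G.toMultigraph.induce ({v} : Set G.V)).Reach) :=
          ⟨Quot.mk _ ⟨v, rfl⟩⟩
        exact Nat.one_le_iff_ne_zero.mpr Nat.card_pos.ne'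
      have hw : ∑ᶠ w ∈ ({v} : Set G.V), (G.weight w : ℤ) = (G.weight v : ℤ) :=
        finsum_mem_singleton
      rw [hw, hcard1]
      have hE0 : (0 : ℤ) ≤ (Nat.card (G.toMultigraph.induce ({v} : Set G.V)).E : ℤ) :=
        Nat.cast_nonneg _
      have hc' : (1 : ℤ) ≤ (Nat.card (Quot (G.toMultigraph.induce ({v} : Set G.V)).Reach) : ℤ) := by
        exact_mod_cast hc
      have hg0 : (0 : ℤ) ≤ (G.weight v : ℤ) := Nat.cast_nonneg _
      linarith
    · -- upper bound via W = {v}ᶜ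
      set W : Set G.V := {v}ᶜ with hWdef
      have hWne : W.Nonempty := ⟨w0, hw0⟩
      have hWproper : W ≠ Set.univ := by
        intro h
        have : v ∈ W := h ▸ Set.mem_univ v
        exact this rfl
      have h2 := hstable W hWne hWproper
      rw [WGraph.genusOf] at h2
      -- vertex count
      have hnW : Nat.card ↥W + 1 = Nat.card G.V := by
        have h5 := Set.ncard_add_ncard_compl ({v} : Set G.V)
        rw [Set.ncard_singleton] at h5
        rw [Nat.card_coe_set_eq, hWdef]
        omega
      -- edge count
      have hEW : Nat.card G.E ≤ Nat.card (G.toMultigraph.induce W).E + G.toMultigraph.valence v := by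
        have hA : Nat.card (G.toMultigraph.induce W).E
            = ({e : G.E | G.src e ∈ W ∧ G.tgt e ∈ W}).ncard :=
          Nat.card_coe_set_eq _
        have hAc : ({e : G.E | G.src e ∈ W ∧ G.tgt e ∈ W}ᶜ : Set G.E)
            = {e : G.E | G.src e = v} ∪ {e : G.E | G.tgt e = v} := by
          ext e
          simp only [Set.mem_compl_iff, Set.mem_setOf_eq, Set.mem_union, hWdef,
            Set.mem_compl_iff, Set.mem_singleton_iff, not_and_or, not_not]
        have hsum := Set.ncard_add_ncard_compl ({e : G.E | G.src e ∈ W ∧ G.tgt e ∈ W})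
        have hle : ({e : G.E | G.src e ∈ W ∧ G.tgt e ∈ W}ᶜ : Set G.E).ncard
            ≤ G.toMultigraph.valence v := by
          rw [hAc]
          exact le_trans (Set.ncard_union_le _ _) le_rfl
        omega
      -- component count
      have hc : 1 ≤ Nat.card (Quot (G.toMultigraph.induce W).Reach) := by
        haveI : Finite (Quot (G.toMultigraph.induce W).Reach) :=
          Finite.of_surjective _ Quot.exists_rep
        haveI : Nonempty (Quot (G.toMultigraph.induce W).Reach) :=
          ⟨Quot.mk _ ⟨w0, hw0⟩⟩
        exact Nat.one_le_iff_ne_zero.mpr Nat.card_pos.ne'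
      -- sum splittings
      have hd1 : d v + ∑ᶠ w ∈ W, d w = ∑ᶠ w, d w := hsplit d
      have hs1 := hsplit (fun w => (G.weight w : ℤ))
      beta_reduce at hs1
      have hg : G.genus = 1 - (Nat.card G.V : ℤ) + (Nat.card G.E : ℤ)
          + ∑ᶠ w, (G.weight w : ℤ) := rfl
      -- cast the nat facts
      have hnW' : (Nat.card ↥W : ℤ) + 1 = (Nat.card G.V : ℤ) := by exact_mod_cast hnW
      have hEW' : (Nat.card G.E : ℤ)
          ≤ (Nat.card (G.toMultigraph.induce W).E : ℤ)
            + (G.toMultigraph.valence v : ℤ) := by exact_mod_cast hEW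
      have hc' : (1 : ℤ) ≤ (Nat.card (Quot (G.toMultigraph.induce W).Reach) : ℤ) := by
        exact_mod_cast hc
      have hgv0 : (0 : ℤ) ≤ (G.weight v : ℤ) := Nat.cast_nonneg _
      rcases htot with h | ⟨h, hw1⟩
      · rw [hg] at h
        linarith
      · rw [hg] at h
        have hgv1 : (1 : ℤ) ≤ (G.weight v : ℤ) := by exact_mod_cast hw1 v
        linarith
end

section
/- Let X be a semistable curve, d̲ a uniform multidegree, v a vertex of the dual graph, and Y the subcurve corresponding to the Dhar subgraph Dh(v, d̲). If Y^c (the closure of the complement of Y) is nonempty, then Y^c is semistable and the multidegree of L|_{Y^c}(−Y ∩ Y^c) is uniform on Y^c, for any line bundle L of multidegree d̲. -/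
section Aux

open Set

lemma aux_ncard_split {α : Type} [Finite α] (P Q : α → Prop) :
    {a | P a}.ncard = {a | P a ∧ Q a}.ncard + {a | P a ∧ ¬ Q a}.ncard := by
  classical
  rw [← Set.ncard_union_eq ?_ (Set.toFinite _) (Set.toFinite _)]
  · congr 1
    ext a
    by_cases h : Q a <;> simp [h]
  · rw [Set.disjoint_left]
    rintro a ⟨-, hq⟩ ⟨-, hnq⟩
    exact hnq hq

lemma aux_edgesTo_mono (G : Multigraph) (w : G.V) {S T : Set G.V} (h : S ⊆ T) :
    G.edgesTo w S ≤ G.edgesTo w T := by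
  apply Set.ncard_le_ncard _ (Set.toFinite _)
  rintro e (⟨h1, h2⟩ | ⟨h1, h2⟩)
  · exact Or.inl ⟨h1, h h2⟩
  · exact Or.inr ⟨h1, h h2⟩

lemma aux_dhar_closed (G : Multigraph) (d : G.V → ℤ) (v : G.V) (w : G.V)
    (hw : w ∉ G.dhar d v) : (G.edgesTo w (G.dhar d v) : ℤ) ≤ d w := by
  have : ¬ ∀ S ∈ {S : Set G.V | v ∈ S ∧ ∀ u ∉ S, (G.edgesTo u S : ℤ) ≤ d u}, w ∈ S := by
    intro h
    exact hw (Set.mem_sInter.mpr h)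
  push_neg at this
  obtain ⟨S, hS, hwS⟩ := this
  have hsub : G.dhar d v ⊆ S := Set.sInter_subset_of_mem hS
  calc (G.edgesTo w (G.dhar d v) : ℤ) ≤ (G.edgesTo w S : ℤ) := by
        exact_mod_cast aux_edgesTo_mono G w hsub
    _ ≤ d w := hS.2 w hwS

/-- Valence splits: ambient valence = valence in induced complement + edges to `A`. -/
lemma aux_valence_split (G : Multigraph) (A : Set G.V) (w : G.V) (hw : w ∈ Aᶜ) :
    G.valence w = (G.induce Aᶜ).valence ⟨w, hw⟩ + G.edgesTo w A := by
  classical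
  have e1 : {e : (G.induce Aᶜ).E | (G.induce Aᶜ).src e = ⟨w, hw⟩}.ncard
      = {e : G.E | G.src e = w ∧ ¬ G.tgt e ∈ A}.ncard := by
    rw [← Nat.card_coe_set_eq, ← Nat.card_coe_set_eq]
    exact Nat.card_congr
      { toFun := fun e => ⟨e.1.1, congrArg Subtype.val e.2, e.1.2.2⟩
        invFun := fun e =>
          ⟨⟨e.1, by show G.src e.1 ∈ Aᶜ; rw [e.2.1]; exact hw, e.2.2⟩,
            Subtype.ext e.2.1⟩
        left_inv := fun e => Subtype.ext (Subtype.ext rfl)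
        right_inv := fun e => Subtype.ext rfl }
  have e2 : {e : (G.induce Aᶜ).E | (G.induce Aᶜ).tgt e = ⟨w, hw⟩}.ncard
      = {e : G.E | G.tgt e = w ∧ ¬ G.src e ∈ A}.ncard := by
    rw [← Nat.card_coe_set_eq, ← Nat.card_coe_set_eq]
    exact Nat.card_congr
      { toFun := fun e => ⟨e.1.1, congrArg Subtype.val e.2, e.1.2.1⟩
        invFun := fun e =>
          ⟨⟨e.1, e.2.2, by show G.tgt e.1 ∈ Aᶜ; rw [e.2.1]; exact hw⟩,
            Subtype.ext e.2.1⟩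
        left_inv := fun e => Subtype.ext (Subtype.ext rfl)
        right_inv := fun e => Subtype.ext rfl }
  have hsplit1 : {e : G.E | G.src e = w}.ncard
      = {e : G.E | G.src e = w ∧ G.tgt e ∈ A}.ncard
        + {e : G.E | G.src e = w ∧ ¬ G.tgt e ∈ A}.ncard :=
    aux_ncard_split _ _
  have hsplit2 : {e : G.E | G.tgt e = w}.ncard
      = {e : G.E | G.tgt e = w ∧ G.src e ∈ A}.ncard
        + {e : G.E | G.tgt e = w ∧ ¬ G.src e ∈ A}.ncard :=
    aux_ncard_split _ _
  have hedges : G.edgesTo w A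
      = {e : G.E | G.src e = w ∧ G.tgt e ∈ A}.ncard
        + {e : G.E | G.tgt e = w ∧ G.src e ∈ A}.ncard := by
    unfold Multigraph.edgesTo
    rw [show {e : G.E | (G.src e = w ∧ G.tgt e ∈ A) ∨ (G.tgt e = w ∧ G.src e ∈ A)}
        = {e : G.E | G.src e = w ∧ G.tgt e ∈ A} ∪ {e : G.E | G.tgt e = w ∧ G.src e ∈ A}
        from rfl]
    apply Set.ncard_union_eq _ (Set.toFinite _) (Set.toFinite _)
    rw [Set.disjoint_left]
    rintro e ⟨h1, h2⟩ ⟨h3, h4⟩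
    exact hw (h1 ▸ h4)
  unfold Multigraph.valence
  rw [e1, e2, hsplit1, hsplit2, hedges]
  ring

end Aux

/-- Let `X` be a semistable curve (encoded by its weighted
dual graph `G`), `d̲` a uniform multidegree, `v` a vertex, and `Y` the subcurve
corresponding to the Dhar subgraph `Dh(v, d̲)`. If `Y^c` (corresponding to the
complementary vertex set `W = Dh(v, d̲)ᶜ`) is nonempty, then `Y^c` is
semistable and the multidegree of `L|_{Y^c}(-Y ∩ Y^c)`, namely
`w ↦ d̲_w - #(edges from w to Dh(v, d̲))`, is uniform on `Y^c`. -/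
theorem dhar_complement_semistable_uniform
    (G : WGraph) (hss : G.Semistable) (d : G.V → ℤ)
    (huni : ∀ v : G.V, 0 ≤ d v ∧
      d v ≤ 2 * (G.weight v : ℤ) - 2 + (G.toMultigraph.valence v : ℤ))
    (v : G.V) (hne : (G.toMultigraph.dhar d v)ᶜ.Nonempty) :
    (G.induce (G.toMultigraph.dhar d v)ᶜ).Semistable ∧
    ∀ w : ((G.toMultigraph.dhar d v)ᶜ : Set G.V),
      0 ≤ d w.1 - (G.toMultigraph.edgesTo w.1 (G.toMultigraph.dhar d v) : ℤ) ∧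
      d w.1 - (G.toMultigraph.edgesTo w.1 (G.toMultigraph.dhar d v) : ℤ) ≤
        2 * (G.weight w.1 : ℤ) - 2 +
          ((G.induce (G.toMultigraph.dhar d v)ᶜ).toMultigraph.valence w : ℤ) := by
  set A := G.toMultigraph.dhar d v with hA
  have key : ∀ w : (Aᶜ : Set G.V),
      0 ≤ d w.1 - (G.toMultigraph.edgesTo w.1 A : ℤ) ∧
      d w.1 - (G.toMultigraph.edgesTo w.1 A : ℤ) ≤
        2 * (G.weight w.1 : ℤ) - 2 +
          ((G.induce Aᶜ).toMultigraph.valence w : ℤ) := by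
    rintro ⟨w, hw⟩
    have hcl : (G.toMultigraph.edgesTo w A : ℤ) ≤ d w :=
      aux_dhar_closed G.toMultigraph d v w hw
    have hval : G.toMultigraph.valence w
        = (G.toMultigraph.induce Aᶜ).valence ⟨w, hw⟩ + G.toMultigraph.edgesTo w A :=
      aux_valence_split G.toMultigraph A w hw
    constructor
    · linarith
    · have h2 := (huni w).2
      have heq : (G.induce Aᶜ).toMultigraph.valence ⟨w, hw⟩
          = (G.toMultigraph.induce Aᶜ).valence ⟨w, hw⟩ := rfl
      show d w - (G.toMultigraph.edgesTo w A : ℤ) ≤ 2 * (G.weight w : ℤ) - 2 +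
          ((G.induce Aᶜ).toMultigraph.valence ⟨w, hw⟩ : ℤ)
      rw [heq]
      have hv2 : ((G.toMultigraph.induce Aᶜ).valence ⟨w, hw⟩ : ℤ)
          = (G.toMultigraph.valence w : ℤ) - (G.toMultigraph.edgesTo w A : ℤ) := by
        rw [hval]; push_cast; ring
      rw [hv2]
      linarith
  refine ⟨?_, key⟩
  rintro ⟨w, hw⟩ hwt
  have hcl : (G.toMultigraph.edgesTo w A : ℤ) ≤ d w :=
    aux_dhar_closed G.toMultigraph d v w hw
  have hval : G.toMultigraph.valence w
      = (G.toMultigraph.induce Aᶜ).valence ⟨w, hw⟩ + G.toMultigraph.edgesTo w A :=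
    aux_valence_split G.toMultigraph A w hw
  have hd0 : (d w) ≤ 2 * (G.weight w : ℤ) - 2 + (G.toMultigraph.valence w : ℤ) :=
    (huni w).2
  have hwt' : (G.weight w : ℤ) = 0 := by
    have : G.weight w = 0 := hwt
    exact_mod_cast this
  have h0 : (0 : ℤ) ≤ d w := (huni w).1
  have hkey : (2 : ℤ) ≤ ((G.toMultigraph.induce Aᶜ).valence ⟨w, hw⟩ : ℤ) := by
    push_cast [hval] at hd0
    linarith
  show 2 ≤ (G.toMultigraph.induce Aᶜ).valence ⟨w, hw⟩
  exact_mod_cast hkey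
end
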